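/- Every 021-avoiding ascent sequence that also avoids 0010 is either nondecreasing, or of the form 0 1^{a_1} ⋯ j^{a_j} 0^r σ with j ≥ 1, all exponents positive, and σ empty or a staircase word starting at j or j+1, or of the form 0 1^{a_1} ⋯ j^{a_j} 0^r j^t (j+1)^{a_{j+1}} ⋯ ℓ^{a_ℓ} ρ with 1 ≤ j ≤ ℓ, all exponents positive, and ρ a staircase word starting at ℓ+2. -/

import Mathlib

open PowerSeries

/-- Number of ascents of a word. -/
def ascN (w : List ℕ) : ℕ := ((w.zip w.tail).filter (fun p => decide (p.1 < p.2))).length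

/-- `w` is an ascent sequence. -/
def IsAscentSeq (w : List ℕ) : Prop :=
  (w ≠ [] → w.headD 0 = 0) ∧
  ∀ i, 0 < i → i < w.length → w.getD i 0 ≤ ascN (w.take i) + 1

/-- `w` contains the pattern `τ` (classical pattern containment). -/
def ContainsPat (w τ : List ℕ) : Prop :=
  ∃ s : List ℕ, s.Sublist w ∧ s.length = τ.length ∧
    ∀ j k, j < τ.length → k < τ.length →
      ((s.getD j 0 < s.getD k 0 ↔ τ.getD j 0 < τ.getD k 0) ∧
       (s.getD j 0 = s.getD k 0 ↔ τ.getD j 0 = τ.getD k 0))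

def AvoidsPat (w τ : List ℕ) : Prop := ¬ ContainsPat w τ

/-- Ascent sequences of length `n` avoiding `021` and the pattern `τ`. -/
def BSet (n : ℕ) (τ : List ℕ) : Set (List ℕ) :=
  {w | w.length = n ∧ IsAscentSeq w ∧ AvoidsPat w [0,2,1] ∧ AvoidsPat w τ}

/-- Staircase word: each letter equals or is one more than the previous. -/
def IsStaircase (w : List ℕ) : Prop := w.Chain' (fun a b => b = a ∨ b = a + 1)

/-- Number of jumps of a nondecreasing word starting with 0. -/
def JumpCount (w : List ℕ) : ℕ := w.foldr max 0 + 1 - w.toFinset.card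

/-- Nondecreasing words of length `n` starting with 0 with at most `r` jumps. -/
def NDSet (n r : ℕ) : Set (List ℕ) :=
  {w | w.length = n ∧ w ≠ [] ∧ w.headD 0 = 0 ∧ List.Pairwise (· ≤ ·) w ∧ JumpCount w ≤ r}

/-- The word `s^{a_s} (s+1)^{a_{s+1}} ⋯ (s+t-1)^{a_{s+t-1}}`. -/
def runBlock (a : ℕ → ℕ) (s t : ℕ) : List ℕ :=
  ((List.range' s t).map fun k => List.replicate (a k) k).flatten

lemma ascN_nil : ascN [] = 0 := rfl
lemma ascN_singleton (a : ℕ) : ascN [a] = 0 := rfl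
lemma ascN_cons_cons (a b : ℕ) (l : List ℕ) :
    ascN (a :: b :: l) = (if a < b then 1 else 0) + ascN (b :: l) := by
  simp only [ascN, List.tail_cons, List.zip_cons_cons, List.filter_cons]
  split <;> simp_all <;> omega

lemma ascN_append (l₁ l₂ : List ℕ) (a b : ℕ) (h₁ : l₁.getLast? = some a)
    (h₂ : l₂.head? = some b) :
    ascN (l₁ ++ l₂) = ascN l₁ + ascN l₂ + if a < b then 1 else 0 := by
  induction l₁ with
  | nil => simp at h₁
  | cons x t ih =>
    cases t with
    | nil =>
      simp at h₁; subst h₁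
      cases l₂ with
      | nil => simp at h₂
      | cons y s =>
        simp at h₂; subst h₂
        simp [ascN_cons_cons, ascN_singleton]; omega
    | cons y s =>
      rw [List.getLast?_cons_cons] at h₁
      have := ih h₁
      simp only [List.cons_append] at *
      rw [ascN_cons_cons, this, ascN_cons_cons]
      omega

lemma ascN_replicate (r x : ℕ) : ascN (List.replicate r x) = 0 := by
  induction r with
  | zero => rfl
  | succ n ih =>
    cases n with
    | zero => rfl
    | succ m =>
      rw [List.replicate_succ, List.replicate_succ, ascN_cons_cons, ← List.replicate_succ, ih]
      simp

lemma ascent_bound (π p rest : List ℕ) (x : ℕ) (h : IsAscentSeq π)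
    (he : π = p ++ x :: rest) (hp : p ≠ []) : x ≤ ascN p + 1 := by
  have h1 : 0 < p.length := List.length_pos_iff.mpr hp
  have h2 : p.length < π.length := by
    subst he; simp
  have := h.2 p.length h1 h2
  rw [he] at this
  rw [List.getD_eq_getElem?_getD, List.getElem?_append_right (le_refl _),
    Nat.sub_self, List.take_left] at this
  simpa using this
lemma no021 (w : List ℕ) (hw : AvoidsPat w [0,2,1]) {x y z : ℕ}
    (h : [x,y,z].Sublist w) (h1 : x < z) (h2 : z < y) : False := by
  apply hw
  refine ⟨[x,y,z], h, rfl, ?_⟩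
  intro j k hj hk
  simp only [List.length_cons, List.length_nil] at hj hk
  interval_cases j <;> interval_cases k <;> constructor <;>
    simp [List.getD] <;> omega

lemma no0010 (w : List ℕ) (hw : AvoidsPat w [0,0,1,0]) {x y : ℕ}
    (h : [x,x,y,x].Sublist w) (h1 : x < y) : False := by
  apply hw
  refine ⟨[x,x,y,x], h, rfl, ?_⟩
  intro j k hj hk
  simp only [List.length_cons, List.length_nil] at hj hk
  interval_cases j <;> interval_cases k <;> constructor <;>
    simp [List.getD] <;> omega
lemma exists_descent (w : List ℕ) (h : ¬ w.Chain' (· ≤ ·)) :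
    ∃ A u v B, w = A ++ u :: v :: B ∧ (A ++ [u]).Chain' (· ≤ ·) ∧ v < u := by
  induction w with
  | nil => exact absurd List.isChain_nil h
  | cons x t ih =>
    cases t with
    | nil => exact absurd (List.isChain_singleton x) h
    | cons y s =>
      rw [List.Chain', List.isChain_cons_cons] at h
      push_neg at h
      by_cases hxy : x ≤ y
      · obtain ⟨A, u, v, B, he, hc, hlt⟩ := ih (h hxy)
        cases A with
        | nil =>
          simp at he
          exact ⟨[x], u, v, B, by simp [he], by
            simp [List.Chain', List.isChain_cons_cons]
            exact he.1 ▸ hxy, hlt⟩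
        | cons a A' =>
          simp at he
          refine ⟨x :: a :: A', u, v, B, by simp [he.1, he.2], ?_, hlt⟩
          exact List.isChain_cons_cons.2 ⟨he.1 ▸ hxy, by simpa [List.Chain'] using hc⟩
      · exact ⟨[], x, y, s, rfl, List.isChain_singleton x, by omega⟩

lemma stair_mono {w : List ℕ} (h : IsStaircase w) : w.Chain' (· ≤ ·) :=
  List.IsChain.imp (fun a b hab => by omega) h

lemma runBlock_zero (a : ℕ → ℕ) (s : ℕ) : runBlock a s 0 = [] := rfl

lemma runBlock_succ (a : ℕ → ℕ) (s t : ℕ) :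
    runBlock a s (t+1) = List.replicate (a s) s ++ runBlock a (s+1) t := by
  simp [runBlock, List.range'_succ]

lemma runBlock_congr {a a' : ℕ → ℕ} {s t : ℕ}
    (h : ∀ k, s ≤ k → k < s + t → a k = a' k) : runBlock a s t = runBlock a' s t := by
  unfold runBlock
  congr 1
  apply List.map_congr_left
  intro k hk
  rw [List.mem_range'_1] at hk
  rw [h k hk.1 hk.2]

/-- staircase decomposition into runBlock -/
lemma stair_runBlock (w : List ℕ) (hw : w ≠ []) (hs : IsStaircase w) (s : ℕ)
    (hh : w.headD 0 = s) :
    ∃ e a, w = runBlock a s (e+1) ∧ w.getLast? = some (s + e) ∧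
      ∀ k, s ≤ k → k ≤ s + e → 1 ≤ a k := by
  induction w generalizing s with
  | nil => exact absurd rfl hw
  | cons x t ih =>
    simp at hh; subst hh
    cases t with
    | nil =>
      refine ⟨0, fun _ => 1, ?_, by simp, fun k _ _ => le_refl 1⟩
      simp [runBlock_succ, runBlock_zero]
    | cons y t' =>
      rw [IsStaircase, List.Chain', List.isChain_cons_cons] at hs
      obtain ⟨hxy, hs'⟩ := hs
      rcases hxy with hy | hy
      · -- y = x
        obtain ⟨e, a, he, hl, ha⟩ := ih (by simp) hs' x (by simp [hy])
        refine ⟨e, Function.update a x (a x + 1), ?_, ?_, ?_⟩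
        · rw [runBlock_succ] at he ⊢
          have : runBlock a (x+1) e = runBlock (Function.update a x (a x + 1)) (x+1) e := by
            apply runBlock_congr; intro k hk _; rw [Function.update_of_ne (by omega)]
          rw [← this, Function.update_self]
          rw [he]
          simp [List.replicate_succ]
        · rw [List.getLast?_cons_cons]; exact hl
        · intro k h1 h2
          by_cases hkx : k = x
          · subst hkx; rw [Function.update_self]; omega
          · rw [Function.update_of_ne hkx]; exact ha k h1 h2
      · -- y = x + 1
        obtain ⟨e, a, he, hl, ha⟩ := ih (by simp) hs' (x+1) (by simp [hy])
        refine ⟨e+1, Function.update a x 1, ?_, ?_, ?_⟩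
        · rw [runBlock_succ, Function.update_self]
          have : runBlock a (x+1) (e+1) = runBlock (Function.update a x 1) (x+1) (e+1) := by
            apply runBlock_congr; intro k hk _; rw [Function.update_of_ne (by omega)]
          rw [← this, ← he]
          simp [List.replicate_succ]
        · rw [List.getLast?_cons_cons, hl]; congr 1; omega
        · intro k h1 h2
          by_cases hkx : k = x
          · subst hkx; rw [Function.update_self]
          · rw [Function.update_of_ne hkx]
            exact ha k (by omega) (by omega)
lemma ascN_snoc (l : List ℕ) (u v : ℕ) (h : l.getLast? = some u) :
    ascN (l ++ [v]) = ascN l + if u < v then 1 else 0 := by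
  rw [ascN_append l [v] u v h rfl, ascN_singleton]; omega

lemma headD_append (w : List ℕ) (v d : ℕ) (h : w ≠ []) :
    (w ++ [v]).headD d = w.headD d := by
  cases w with
  | nil => exact absurd rfl h
  | cons x t => rfl

lemma stair_snoc (w : List ℕ) (u v : ℕ) (h : IsStaircase w) (hl : w.getLast? = some u)
    (hv : v = u ∨ v = u + 1) : IsStaircase (w ++ [v]) := by
  rw [IsStaircase, List.Chain', List.isChain_append]
  refine ⟨h, List.isChain_singleton v, ?_⟩
  intro x hx y hy
  rw [hl] at hx
  simp at hx hy
  subst hx; subst hy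
  exact hv

lemma stair_prefix (π : List ℕ) (hπ : IsAscentSeq π) :
    ∀ q p u rest, π = p ++ (q ++ rest) → p ≠ [] → p.getLast? = some u →
    IsStaircase p → ascN p = u → (p ++ q).Chain' (· ≤ ·) →
    ∃ u', (p ++ q).getLast? = some u' ∧ IsStaircase (p ++ q) ∧ ascN (p ++ q) = u' := by
  intro q
  induction q with
  | nil =>
    intro p u rest he hp hl hs ha _
    exact ⟨u, by simpa using hl, by simpa using hs, by simpa using ha⟩
  | cons v q' ih =>
    intro p u rest he hp hl hs ha hc
    have huv : u ≤ v := by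
      rw [List.Chain', List.isChain_append] at hc
      exact hc.2.2 u hl v rfl
    have hb : v ≤ u + 1 := by
      have := ascent_bound π p (q' ++ rest) v hπ (by rw [he]; simp) hp
      omega
    have hs' : IsStaircase (p ++ [v]) := stair_snoc p u v hs hl (by omega)
    have hl' : (p ++ [v]).getLast? = some v := by simp
    have ha' : ascN (p ++ [v]) = v := by
      rw [ascN_snoc p u v hl, ha]
      split <;> omega
    have := ih (p ++ [v]) v rest (by rw [he]; simp) (by simp) hl' hs' ha'
      (by rw [List.append_assoc]; simpa using hc)
    rwa [List.append_assoc] at this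

def TwoPart (j : ℕ) (w : List ℕ) : Prop :=
  ∃ w1 w2 ℓ, w = w1 ++ w2 ∧ w1 ≠ [] ∧ w2 ≠ [] ∧ IsStaircase w1 ∧ IsStaircase w2 ∧
    w1.headD 0 = j ∧ w1.getLast? = some ℓ ∧ w2.headD 0 = ℓ + 2

def MuFinal (j : ℕ) (w : List ℕ) : Prop :=
  (IsStaircase w ∧ (w.headD 0 = j ∨ w.headD 0 = j + 1)) ∨ TwoPart j w

lemma mu_classify (π C : List ℕ) (j : ℕ) (hπ : IsAscentSeq π) :
    ∀ μ₂ w u E, π = C ++ (w ++ μ₂) → (w ++ μ₂).Chain' (· ≤ ·) → w ≠ [] →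
    w.getLast? = some u → ascN (C ++ w) = u + E →
    ((E = 1 ∧ IsStaircase w ∧ w.headD 0 = j) ∨
     (E = 0 ∧ ((IsStaircase w ∧ w.headD 0 = j + 1) ∨ TwoPart j w))) →
    MuFinal j (w ++ μ₂) := by
  intro μ₂
  induction μ₂ with
  | nil =>
    intro w u E he hc hw hl ha hst
    rw [List.append_nil]
    rcases hst with ⟨_, h1, h2⟩ | ⟨_, h⟩
    · exact Or.inl ⟨h1, Or.inl h2⟩
    · rcases h with ⟨h1, h2⟩ | h
      · exact Or.inl ⟨h1, Or.inr h2⟩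
      · exact Or.inr h
  | cons v μ' ih =>
    intro w u E he hc hw hl ha hst
    have hCw : C ++ w ≠ [] := by simp [hw]
    have hCwl : (C ++ w).getLast? = some u := by
      rw [List.getLast?_append_of_ne_nil C hw]; exact hl
    have huv : u ≤ v := by
      rw [List.Chain', List.isChain_append] at hc
      exact hc.2.2 u hl v rfl
    have hb : v ≤ u + E + 1 := by
      have := ascent_bound π (C ++ w) μ' v hπ (by rw [he]; simp) hCw
      omega
    have ha' : ascN (C ++ (w ++ [v])) = ascN (C ++ w) + if u < v then 1 else 0 := by
      rw [← List.append_assoc]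
      exact ascN_snoc (C ++ w) u v hCwl
    have hgoal : MuFinal j ((w ++ [v]) ++ μ') → MuFinal j (w ++ v :: μ') := by
      rw [List.append_assoc]; simp
    apply hgoal
    have hchain' : ((w ++ [v]) ++ μ').Chain' (· ≤ ·) := by
      rw [List.append_assoc]; simpa using hc
    have hlast' : (w ++ [v]).getLast? = some v := by simp
    rcases hst with ⟨hE, hstair, hhead⟩ | ⟨hE, hrest⟩
    · subst hE
      by_cases hv2 : v = u + 2
      · -- budget spent: new TwoPart
        apply ih (w ++ [v]) v 0 (by rw [he]; simp) hchain' (by simp) hlast'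
          (by rw [ha', ha]; split <;> omega)
        exact Or.inr ⟨rfl, Or.inr ⟨w, [v], u, rfl, hw, by simp, hstair, List.isChain_singleton v,
          hhead, hl, by simp [hv2]⟩⟩
      · -- stays staircase from j
        apply ih (w ++ [v]) v 1 (by rw [he]; simp) hchain' (by simp) hlast'
          (by rw [ha', ha]; split <;> omega)
        exact Or.inl ⟨rfl, stair_snoc w u v hstair hl (by omega),
          by rw [headD_append w v 0 hw]; exact hhead⟩
    · subst hE
      have hvu : v = u ∨ v = u + 1 := by omega
      apply ih (w ++ [v]) v 0 (by rw [he]; simp) hchain' (by simp) hlast'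
        (by rw [ha', ha]; split <;> omega)
      refine Or.inr ⟨rfl, ?_⟩
      rcases hrest with ⟨hstair, hhead⟩ | ⟨w1, w2, ℓ, hw12, hw1, hw2, hs1, hs2, hh1, hl1, hh2⟩
      · exact Or.inl ⟨stair_snoc w u v hstair hl hvu,
          by rw [headD_append w v 0 hw]; exact hhead⟩
      · refine Or.inr ⟨w1, w2 ++ [v], ℓ, by rw [hw12, List.append_assoc], hw1, by simp,
          hs1, ?_, hh1, hl1, by rw [headD_append w2 v 0 hw2]; exact hh2⟩
        have hl2 : w2.getLast? = some u := by
          rw [hw12, List.getLast?_append_of_ne_nil w1 hw2] at hl; exact hl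
        exact stair_snoc w2 u v hs2 hl2 hvu

lemma split_zeros (B : List ℕ) : ∃ s μ, B = List.replicate s 0 ++ μ ∧
    (μ = [] ∨ μ.headD 0 ≠ 0) := by
  induction B with
  | nil => exact ⟨0, [], rfl, Or.inl rfl⟩
  | cons x t ih =>
    by_cases hx : x = 0
    · obtain ⟨s, μ, hB, hμ⟩ := ih
      exact ⟨s + 1, μ, by rw [List.replicate_succ]; simp [hx, hB], hμ⟩
    · exact ⟨0, x :: t, rfl, Or.inr (by simpa using hx)⟩

/-- Structure of members of `B(0010)`: nondecreasing, or one of the two displayed forms. -/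
theorem structure_B0010 (π : List ℕ) (h1 : IsAscentSeq π)
    (h2 : AvoidsPat π [0,2,1]) (h3 : AvoidsPat π [0,0,1,0]) :
    List.Pairwise (· ≤ ·) π ∨
    (∃ (j r : ℕ) (a : ℕ → ℕ) (σ : List ℕ), 1 ≤ j ∧ 1 ≤ r ∧
      (∀ k, 1 ≤ k → k ≤ j → 1 ≤ a k) ∧
      π = 0 :: (runBlock a 1 j ++ List.replicate r 0 ++ σ) ∧
      (σ = [] ∨ (σ ≠ [] ∧ IsStaircase σ ∧ (σ.headD 0 = j ∨ σ.headD 0 = j + 1)))) ∨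
    (∃ (j ℓ r t : ℕ) (a : ℕ → ℕ) (ρ : List ℕ), 1 ≤ j ∧ j ≤ ℓ ∧ 1 ≤ r ∧ 1 ≤ t ∧
      (∀ k, 1 ≤ k → k ≤ ℓ → 1 ≤ a k) ∧
      π = 0 :: (runBlock a 1 j ++ List.replicate r 0 ++ List.replicate t j ++
                runBlock a (j+1) (ℓ - j) ++ ρ) ∧
      ρ ≠ [] ∧ IsStaircase ρ ∧ ρ.headD 0 = ℓ + 2) := by
  by_cases hsorted : π.Chain' (· ≤ ·)
  · exact Or.inl (List.isChain_iff_pairwise.mp hsorted)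
  right
  obtain ⟨A, u, v, B, he, hchainA, hvu⟩ := exists_descent π hsorted
  have hπne : π ≠ [] := by rw [he]; simp
  have hhead : π.headD 0 = 0 := h1.1 hπne
  obtain ⟨a0, A₂, rfl⟩ : ∃ a0 A₂, A = a0 :: A₂ := by
    cases A with
    | nil =>
      exfalso
      rw [he] at hhead
      simp at hhead
      omega
    | cons a0 A₂ => exact ⟨a0, A₂, rfl⟩
  have ha0 : a0 = 0 := by rw [he] at hhead; simpa using hhead
  subst ha0
  set S := A₂ ++ [u] with hSdef
  have heπ : π = 0 :: (S ++ (v :: B)) := by rw [he]; simp [hSdef]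
  have hu1 : 1 ≤ u := by omega
  -- v = 0
  have hv0 : v = 0 := by
    by_contra hv
    refine no021 π h2 (x := 0) (y := u) (z := v) ?_ (by omega) hvu
    rw [heπ]
    refine List.cons_sublist_cons.mpr ?_
    have : ([u] ++ [v]).Sublist (S ++ (v :: B)) :=
      List.Sublist.append ((List.singleton_sublist).mpr (by simp [hSdef]))
        (List.cons_sublist_cons.mpr (List.nil_sublist B))
    simpa using this
  subst hv0
  -- the sorted prefix is a staircase
  have hchainP : (0 :: S).Chain' (· ≤ ·) := by
    have h' : (0 :: A₂) ++ [u] = 0 :: S := by simp [hSdef]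
    rwa [h'] at hchainA
  have hS_ne : S ≠ [] := by simp [hSdef]
  have hSlast : S.getLast? = some u := by
    rw [hSdef]; exact List.getLast?_concat
  have hlastS : (0 :: S).getLast? = some u := by
    rw [show (0 :: S) = (0 :: A₂) ++ [u] by simp [hSdef]]
    exact List.getLast?_concat
  obtain ⟨u', hlast', hstairP0, hascP0⟩ := stair_prefix π h1 S [0] 0 (0 :: B)
    (by rw [heπ]; simp) (by simp) (by simp) (List.isChain_singleton 0) rfl
    (by simpa using hchainP)
  have hu'u : u' = u := by
    have h' : ([0] ++ S).getLast? = some u := by simpa using hlastS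
    rw [hlast'] at h'
    exact Option.some_inj.mp h'
  have hstairP : IsStaircase (0 :: S) := by simpa using hstairP0
  have hascP : ascN (0 :: S) = u := by
    rw [hu'u] at hascP0; simpa using hascP0
  have hstairS : IsStaircase S := hstairP.tail
  -- head of S is 1
  obtain ⟨y, S₂, hSy⟩ := List.exists_cons_of_ne_nil hS_ne
  have hy01 : y = 0 ∨ y = 1 := by
    have h' := hstairP
    rw [IsStaircase, hSy, List.Chain', List.isChain_cons_cons] at h'
    exact h'.1
  have hy1 : y = 1 := by
    rcases hy01 with hy0 | hy1
    · exfalso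
      subst hy0
      have huS : u ∈ S := List.mem_of_mem_getLast? (by rw [hSlast]; rfl)
      have huS₂ : u ∈ S₂ := by
        rw [hSy] at huS
        rcases List.mem_cons.mp huS with h' | h'
        · omega
        · exact h'
      refine no0010 π h3 (x := 0) (y := u) ?_ (by omega)
      rw [heπ, hSy]
      simp only [List.cons_append]
      refine List.cons_sublist_cons.mpr (List.cons_sublist_cons.mpr ?_)
      refine List.Sublist.append ((List.singleton_sublist).mpr huS₂) ?_
      exact List.cons_sublist_cons.mpr (List.nil_sublist B)
    · exact hy1
  have hheadS : S.headD 0 = 1 := by rw [hSy, hy1]; rfl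
  -- S as runBlock
  obtain ⟨e, a, hSrb, hSlast2, hapos⟩ := stair_runBlock S hS_ne hstairS 1 hheadS
  have h1eu : 1 + e = u := by
    rw [hSlast2] at hSlast
    exact Option.some_inj.mp hSlast
  have heu : e + 1 = u := by omega
  rw [heu] at hSrb
  have hapos' : ∀ k, 1 ≤ k → k ≤ u → 1 ≤ a k := fun k hk1 hk2 => hapos k hk1 (by omega)
  -- split B into zeros and μ
  obtain ⟨s, μ, hB, hμhead⟩ := split_zeros B
  have heπ2 : π = (0 :: S) ++ (List.replicate (s+1) 0 ++ μ) := by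
    rw [heπ, hB, List.replicate_succ]
    simp
  set C := (0 :: S) ++ List.replicate (s+1) 0 with hCdef
  have hrep_ne : (List.replicate (s+1) (0:ℕ)) ≠ [] := by simp
  have hClast : C.getLast? = some 0 := by
    rw [hCdef, List.getLast?_append_of_ne_nil _ hrep_ne, List.replicate_succ',
      List.getLast?_concat]
  have hascC : ascN C = u := by
    rw [hCdef, ascN_append (0 :: S) _ u 0 hlastS (by rw [List.replicate_succ]; rfl),
      ascN_replicate, hascP]
    simp
  have hC_ne : C ≠ [] := by simp [hCdef]
  cases μ with
  | nil =>
    refine Or.inl ⟨u, s+1, a, [], hu1, by omega, hapos', ?_, Or.inl rfl⟩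
    rw [heπ2, hSrb]
    simp
  | cons m μ' =>
    have hm0 : m ≠ 0 := by
      rcases hμhead with h' | h'
      · simp at h'
      · simpa using h'
    have hπC : π = C ++ (m :: μ') := by rw [heπ2, hCdef]; simp
    -- no zeros in μ'
    have hzero : ∀ x ∈ μ', x ≠ 0 := by
      intro x hx hx0
      subst hx0
      refine no0010 π h3 (x := 0) (y := m) ?_ (by omega)
      rw [heπ, hB]
      refine List.cons_sublist_cons.mpr ?_
      refine List.Sublist.trans ?_ (List.sublist_append_right S _)
      refine List.cons_sublist_cons.mpr ?_
      refine List.Sublist.trans ?_ (List.sublist_append_right (List.replicate s 0) _)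
      exact List.cons_sublist_cons.mpr ((List.singleton_sublist).mpr hx)
    -- μ is nondecreasing
    have hμchain : (m :: μ').Chain' (· ≤ ·) := by
      by_contra hcc
      obtain ⟨D, u2, v2, E2, heμ, _, hlt2⟩ := exists_descent _ hcc
      have hv2 : v2 ∈ μ' := by
        cases D with
        | nil =>
          rw [List.nil_append] at heμ
          rw [((List.cons.injEq _ _ _ _).mp heμ).2]
          simp
        | cons d D' =>
          rw [List.cons_append] at heμ
          rw [((List.cons.injEq _ _ _ _).mp heμ).2]
          simp
      refine no021 π h2 (x := 0) (y := u2) (z := v2) ?_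
        (Nat.pos_of_ne_zero (hzero v2 hv2)) hlt2
      rw [heπ, hB, heμ]
      refine List.cons_sublist_cons.mpr ?_
      refine List.Sublist.trans ?_ (List.sublist_append_right S _)
      refine List.Sublist.trans ?_ (List.sublist_cons_self 0 _)
      refine List.Sublist.trans ?_ (List.sublist_append_right (List.replicate s 0) _)
      refine List.Sublist.trans ?_ (List.sublist_append_right D _)
      exact List.cons_sublist_cons.mpr (List.cons_sublist_cons.mpr (List.nil_sublist _))
    -- bounds on m
    have hmb : m ≤ u + 1 := by
      have h' := ascent_bound π C μ' m h1 hπC hC_ne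
      omega
    have hmge : u ≤ m := by
      by_contra hlt
      push_neg at hlt
      refine no021 π h2 (x := 0) (y := u) (z := m)
        ?_ (Nat.pos_of_ne_zero hm0) hlt
      rw [heπ2]
      rw [show ((0:ℕ) :: S) = [0] ++ S from rfl, List.append_assoc]
      refine List.cons_sublist_cons.mpr ?_
      show ([u] ++ [m]).Sublist (S ++ (List.replicate (s+1) 0 ++ (m :: μ')))
      have hus : [u].Sublist S := by
        rw [hSdef]; exact (List.singleton_sublist).mpr (by simp)
      have hms : [m].Sublist (List.replicate (s+1) 0 ++ (m :: μ')) := by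
        refine List.Sublist.trans ?_ (List.sublist_append_right (List.replicate (s+1) 0) _)
        exact List.cons_sublist_cons.mpr (List.nil_sublist _)
      exact List.Sublist.append hus hms
    have hascCm : ascN (C ++ [m]) = u + 1 := by
      rw [ascN_snoc C 0 m hClast, hascC]
      have h' : 0 < m := Nat.pos_of_ne_zero hm0
      simp [h']
    have hfinal : MuFinal u ([m] ++ μ') := by
      rcases (by omega : m = u ∨ m = u + 1) with hm | hm
      · exact mu_classify π C u h1 μ' [m] m 1 (by rw [hπC]; rfl) (by simpa using hμchain)
          (by simp) rfl (by rw [hascCm]; omega)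
          (Or.inl ⟨rfl, List.isChain_singleton m, by simp [hm]⟩)
      · exact mu_classify π C u h1 μ' [m] m 0 (by rw [hπC]; rfl) (by simpa using hμchain)
          (by simp) rfl (by rw [hascCm]; omega)
          (Or.inr ⟨rfl, Or.inl ⟨List.isChain_singleton m, by simp [hm]⟩⟩)
    rw [List.singleton_append] at hfinal
    rcases hfinal with ⟨hstμ, hheadμ⟩ | ⟨w1, w2, ℓ', h12, hw1ne, hw2ne, hsw1, hsw2, hh1, hl1, hh2⟩
    · -- second disjunct with σ = μ
      refine Or.inl ⟨u, s+1, a, m :: μ', hu1, by omega, hapos', ?_,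
        Or.inr ⟨by simp, hstμ, hheadμ⟩⟩
      rw [hπC, hCdef, hSrb]
      simp
    · -- third disjunct
      obtain ⟨e2, b, hw1rb, hw1last, hbpos⟩ := stair_runBlock w1 hw1ne hsw1 u hh1
      have hℓ' : ℓ' = u + e2 := by
        rw [hw1last] at hl1
        exact (Option.some_inj.mp hl1).symm
      have hsub : u + e2 - u = e2 := by omega
      set c : ℕ → ℕ := fun k => if k ≤ u then a k else b k with hcdef
      refine Or.inr ⟨u, u + e2, s+1, b u, c, w2, hu1, by omega, by omega,
        hbpos u (le_refl u) (by omega), ?_, ?_, hw2ne, hsw2, by rw [hh2, hℓ']⟩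
      · intro k hk1 hk2
        by_cases hku : k ≤ u
        · simp only [hcdef, if_pos hku]
          exact hapos' k hk1 hku
        · simp only [hcdef, if_neg hku]
          exact hbpos k (by omega) (by omega)
      · have hc1 : runBlock c 1 u = runBlock a 1 u := by
          apply runBlock_congr
          intro k hk1 hk2
          simp only [hcdef]
          rw [if_pos (by omega)]
        have hc2 : runBlock c (u+1) (u + e2 - u) = runBlock b (u+1) e2 := by
          rw [hsub]
          apply runBlock_congr
          intro k hk1 hk2
          simp only [hcdef]
          rw [if_neg (by omega)]
        rw [hc1, hc2, hπC, hCdef, hSrb, h12, hw1rb, runBlock_succ]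
        simp
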